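/- arXiv:2505.12263 — 5 statements merged into one kernel-verified Lean document; each statement's English description precedes it below -/
import Mathlib

section
/- For the regularized gap function f_α(x) = −⟨F(x), H_α(x) − x⟩ − (α/2)‖H_α(x) − x‖², where H_α(x) = P_C(x − α⁻¹F(x)), one has f_α(x) ≥ 0 for every x ∈ C, and f_α(x) = 0 if and only if x solves VIP(F,C). -/
open scoped RealInnerProductSpace

/-!
Write `p = H x` and `d = p - x`. Testing the variational characterisation of the projection
`p = P_C (x - α⁻¹ F x)` against the point `x ∈ C` gives `⟪F x, d⟫ ≤ -α ‖d‖²`, hence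
`f x ≥ (α/2) ‖d‖² ≥ 0`. So `f x = 0` forces `p = x`, and the variational inequality of the
projection at the fixed point `x` is exactly VIP(F,C). Conversely, a solution of VIP(F,C) has
`⟪F x, d⟫ ≥ 0` because `p ∈ C`, so `f x ≤ 0`.
-/

section
variable {E : Type*} [NormedAddCommGroup E] [InnerProductSpace ℝ E] {C : Set E}

theorem real_inner_sub_le_zero_of_forall_norm_sub_le (hconv : Convex ℝ C) {p z : E}
    (hp : p ∈ C) (hmin : ∀ y ∈ C, ‖p - z‖ ≤ ‖y - z‖) : ∀ w ∈ C, ⟪z - p, w - p⟫ ≤ 0 := by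
  have : Nonempty C := ⟨⟨p, hp⟩⟩
  refine (norm_eq_iInf_iff_real_inner_le_zero hconv hp).1 (le_antisymm ?_ ?_)
  · exact le_ciInf fun w => by simpa only [norm_sub_rev z] using hmin w w.2
  · exact ciInf_le ⟨0, by rintro _ ⟨w, rfl⟩; positivity⟩ (⟨p, hp⟩ : C)

variable {v x p : E} {α : ℝ}

theorem real_inner_sub_le_neg_mul_norm_sq (hα : 0 < α)
    (hvi : ⟪x - α⁻¹ • v - p, x - p⟫ ≤ 0) : ⟪v, p - x⟫ ≤ -(α * ‖p - x‖ ^ 2) := by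
  have hexpand : ⟪x - α⁻¹ • v - p, x - p⟫ = α⁻¹ * ⟪v, p - x⟫ + ‖p - x‖ ^ 2 := by
    rw [show x - α⁻¹ • v - p = -(α⁻¹ • v) - (p - x) by abel,
      show x - p = -(p - x) by abel]
    generalize p - x = d
    simp only [inner_neg_right, inner_sub_left, inner_neg_left, real_inner_smul_left,
      real_inner_self_eq_norm_sq]
    ring
  have hscaled := mul_nonpos_of_nonneg_of_nonpos hα.le (hexpand ▸ hvi)
  rw [mul_add, ← mul_assoc, mul_inv_cancel₀ hα.ne', one_mul] at hscaled
  linarith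

theorem half_mul_norm_sq_le_gap (hα : 0 < α) (hvi : ⟪x - α⁻¹ • v - p, x - p⟫ ≤ 0) :
    α / 2 * ‖p - x‖ ^ 2 ≤ -⟪v, p - x⟫ - α / 2 * ‖p - x‖ ^ 2 := by
  linarith [real_inner_sub_le_neg_mul_norm_sq hα hvi]

theorem gap_nonneg_and_eq_zero_iff (hα : 0 < α) (hx : x ∈ C) (hp : p ∈ C)
    (hvi : ∀ w ∈ C, ⟪x - α⁻¹ • v - p, w - p⟫ ≤ 0) :
    0 ≤ -⟪v, p - x⟫ - α / 2 * ‖p - x‖ ^ 2 ∧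
      (-⟪v, p - x⟫ - α / 2 * ‖p - x‖ ^ 2 = 0 ↔ ∀ y ∈ C, 0 ≤ ⟪v, y - x⟫) := by
  have hlow := half_mul_norm_sq_le_gap hα (hvi x hx)
  have hsq : 0 ≤ α / 2 * ‖p - x‖ ^ 2 := by positivity
  refine ⟨hsq.trans hlow, fun hzero y hy => ?_, fun hsol => ?_⟩
  · have hpx : p = x := by
      have : ‖p - x‖ ^ 2 = 0 := by nlinarith
      simpa [sub_eq_zero] using this
    have hfixed := hvi y hy
    rw [hpx, sub_sub_cancel_left, inner_neg_left, real_inner_smul_left, neg_nonpos] at hfixed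
    exact nonneg_of_mul_nonneg_right hfixed (inv_pos.2 hα)
  · linarith [hsol p hp]

end

theorem gap_function_nonneg_and_zero_iff_general {n : ℕ}
    (C : Set (EuclideanSpace ℝ (Fin n)))
    (hconv : Convex ℝ C)
    (F : EuclideanSpace ℝ (Fin n) → EuclideanSpace ℝ (Fin n))
    (P : EuclideanSpace ℝ (Fin n) → EuclideanSpace ℝ (Fin n))
    (hPmem : ∀ x, P x ∈ C)
    (hPmin : ∀ x, ∀ y ∈ C, ‖P x - x‖ ≤ ‖y - x‖)
    (α : ℝ) (hα : 0 < α)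
    (H : EuclideanSpace ℝ (Fin n) → EuclideanSpace ℝ (Fin n))
    (hH : ∀ x, H x = P (x - α⁻¹ • F x))
    (f : EuclideanSpace ℝ (Fin n) → ℝ)
    (hf : ∀ x, f x = -⟪F x, H x - x⟫ - (α / 2) * ‖H x - x‖ ^ 2) :
    ∀ x ∈ C, 0 ≤ f x ∧ (f x = 0 ↔ ∀ y ∈ C, 0 ≤ ⟪F x, y - x⟫) := by
  intro x hx
  have hvi : ∀ w ∈ C, ⟪x - α⁻¹ • F x - H x, w - H x⟫ ≤ 0 := by
    rw [hH x]
    exact real_inner_sub_le_zero_of_forall_norm_sub_le hconv (hPmem _) (hPmin _)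
  rw [hf x]
  exact gap_nonneg_and_eq_zero_iff hα hx (hH x ▸ hPmem _) hvi

/-- The regularized gap function
`f_α(x) = -⟪F x, H_α x - x⟫ - (α/2)‖H_α x - x‖²`, `H_α x = P_C (x - α⁻¹ F x)`,
is nonnegative on `C`, and vanishes at `x ∈ C` iff `x` solves VIP(F,C). -/
theorem gap_function_nonneg_and_zero_iff {n : ℕ}
    (C : Set (EuclideanSpace ℝ (Fin n))) (hne : C.Nonempty) (hcl : IsClosed C)
    (hconv : Convex ℝ C)
    (F : EuclideanSpace ℝ (Fin n) → EuclideanSpace ℝ (Fin n)) (hF : Continuous F)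
    (P : EuclideanSpace ℝ (Fin n) → EuclideanSpace ℝ (Fin n))
    (hPmem : ∀ x, P x ∈ C)
    (hPmin : ∀ x, ∀ y ∈ C, ‖P x - x‖ ≤ ‖y - x‖)
    (α : ℝ) (hα : 0 < α)
    (H : EuclideanSpace ℝ (Fin n) → EuclideanSpace ℝ (Fin n))
    (hH : ∀ x, H x = P (x - α⁻¹ • F x))
    (f : EuclideanSpace ℝ (Fin n) → ℝ)
    (hf : ∀ x, f x = -⟪F x, H x - x⟫ - (α / 2) * ‖H x - x‖ ^ 2) :
    ∀ x ∈ C, 0 ≤ f x ∧ (f x = 0 ↔ ∀ y ∈ C, 0 ≤ ⟪F x, y - x⟫) :=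
  gap_function_nonneg_and_zero_iff_general C hconv F P hPmem hPmin α hα H hH f hf
end

section
/- If F is strongly monotone on C with modulus μ and x* solves VIP(F,C), then the regularized gap function satisfies f_α(x) ≥ (μ − α/2)‖x − x*‖² for all x ∈ C. Consequently, if α < 2μ then f_α(x) → ∞ whenever x ∈ C and ‖x‖ → ∞. -/
open scoped RealInnerProductSpace

/-- If `F` is strongly monotone with modulus `μ` on `C` and `x*` solves VIP(F,C),
then `f_α(x) ≥ (μ - α/2)‖x - x*‖²` on `C`; consequently, if `α < 2μ` then
`f_α(x) → ∞` as `‖x‖ → ∞` within `C`. -/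
theorem gap_function_strong_monotone_lower_bound {n : ℕ}
    (C : Set (EuclideanSpace ℝ (Fin n))) (hne : C.Nonempty) (hcl : IsClosed C)
    (hconv : Convex ℝ C)
    (F : EuclideanSpace ℝ (Fin n) → EuclideanSpace ℝ (Fin n))
    (μ : ℝ) (hμ : 0 < μ)
    (hmono : ∀ x ∈ C, ∀ y ∈ C, μ * ‖x - y‖ ^ 2 ≤ ⟪F x - F y, x - y⟫)
    (P : EuclideanSpace ℝ (Fin n) → EuclideanSpace ℝ (Fin n))
    (hPmem : ∀ x, P x ∈ C)
    (hPmin : ∀ x, ∀ y ∈ C, ‖P x - x‖ ≤ ‖y - x‖)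
    (α : ℝ) (hα : 0 < α)
    (f : EuclideanSpace ℝ (Fin n) → ℝ)
    (hf : ∀ x, f x = -⟪F x, P (x - α⁻¹ • F x) - x⟫
        - (α / 2) * ‖P (x - α⁻¹ • F x) - x‖ ^ 2)
    (xs : EuclideanSpace ℝ (Fin n)) (hxs : xs ∈ C)
    (hsol : ∀ y ∈ C, 0 ≤ ⟪F xs, y - xs⟫) :
    (∀ x ∈ C, (μ - α / 2) * ‖x - xs‖ ^ 2 ≤ f x) ∧
      (α < 2 * μ → ∀ M : ℝ, ∃ R : ℝ, ∀ x ∈ C, R ≤ ‖x‖ → M ≤ f x) := by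
  have key : ∀ x ∈ C, (μ - α / 2) * ‖x - xs‖ ^ 2 ≤ f x := by
    intro x hx
    set g := F x with hg
    set z := x - α⁻¹ • g with hz
    have hproj : ‖P z - z‖ ≤ ‖xs - z‖ := hPmin z xs hxs
    have hproj2 : ‖P z - z‖ ^ 2 ≤ ‖xs - z‖ ^ 2 :=
      pow_le_pow_left₀ (norm_nonneg _) hproj 2
    have hid : ∀ w : EuclideanSpace ℝ (Fin n),
        -⟪g, w⟫ - α / 2 * ‖w‖ ^ 2
          = α / 2 * ‖α⁻¹ • g‖ ^ 2 - α / 2 * ‖w + α⁻¹ • g‖ ^ 2 := by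
      intro w
      rw [norm_add_sq_real, norm_smul, real_inner_smul_right]
      have hn : ‖α⁻¹‖ = α⁻¹ := by
        rw [Real.norm_eq_abs, abs_of_pos (by positivity)]
      rw [hn, real_inner_comm]
      field_simp
      ring
    have w1 : P z - x + α⁻¹ • g = P z - z := by rw [hz]; abel
    have w2 : xs - x + α⁻¹ • g = xs - z := by rw [hz]; abel
    have e1 := hid (P z - x)
    have e2 := hid (xs - x)
    rw [w1] at e1
    rw [w2] at e2
    have h1 : -⟪g, xs - x⟫ - α / 2 * ‖xs - x‖ ^ 2 ≤ f x := by
      rw [hf x, ← hg, ← hz, e1, e2]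
      nlinarith
    have hm := hmono x hx xs hxs
    have hs := hsol x hx
    rw [inner_sub_left] at hm
    have hin : ⟪g, xs - x⟫ = -⟪g, x - xs⟫ := by
      rw [← inner_neg_right, neg_sub]
    have hnrm : ‖xs - x‖ = ‖x - xs‖ := norm_sub_rev _ _
    rw [hin, hnrm] at h1
    nlinarith [h1, hm, hs]
  refine ⟨key, fun hαμ M => ?_⟩
  have hc : 0 < μ - α / 2 := by linarith
  set c := μ - α / 2 with hcdef
  refine ⟨‖xs‖ + Real.sqrt (max M 0 / c), fun x hx hR => ?_⟩
  have h1 : Real.sqrt (max M 0 / c) ≤ ‖x - xs‖ := by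
    have := norm_sub_norm_le x xs
    linarith
  have h2 : max M 0 / c ≤ ‖x - xs‖ ^ 2 := by
    have := pow_le_pow_left₀ (Real.sqrt_nonneg _) h1 2
    rwa [Real.sq_sqrt (by positivity)] at this
  have h3 : M ≤ c * ‖x - xs‖ ^ 2 := by
    have hM : M ≤ max M 0 := le_max_left _ _
    have : max M 0 ≤ c * ‖x - xs‖ ^ 2 := by
      rw [div_le_iff₀ hc] at h2
      linarith [h2]
    linarith
  exact h3.trans (key x hx)
end

section
/- Let M ∈ ℝ^{n×n} be positive definite and q ∈ ℝⁿ, and let ẑ ∈ C be the solution of the linear variational inequality ⟨Mẑ + q, x − ẑ⟩ ≥ 0 for all x ∈ C. Then for any z ∈ C, ‖z − ẑ‖ ≤ ((1 + ‖M‖)/c) ‖z − P_C(z − (Mz + q))‖, where c > 0 is the smallest eigenvalue of (M + Mᵀ)/2. -/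
open scoped RealInnerProductSpace

lemma proj_var_ineq {E : Type*} [NormedAddCommGroup E] [InnerProductSpace ℝ E]
    {C : Set E} (hconv : Convex ℝ C) {x w : E} (hw : w ∈ C)
    (hmin : ∀ y ∈ C, ‖w - x‖ ≤ ‖y - x‖) :
    ∀ y ∈ C, ⟪x - w, y - w⟫ ≤ 0 := by
  intro y hy
  by_contra h
  push_neg at h
  have hvy : (0:ℝ) < ‖y - w‖ ^ 2 := by
    rcases eq_or_ne y w with rfl | hne
    · simp at h
    · exact pow_pos (norm_pos_iff.mpr (sub_ne_zero.mpr hne)) 2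
  set a : ℝ := ⟪x - w, y - w⟫ with ha
  set t : ℝ := min 1 (a / ‖y - w‖ ^ 2) with ht
  have ht0 : 0 < t := lt_min one_pos (div_pos h hvy)
  have ht1 : t ≤ 1 := min_le_left _ _
  have hta : t * ‖y - w‖ ^ 2 ≤ a := by
    rw [← le_div_iff₀ hvy]; exact min_le_right _ _
  have hmem : w + t • (y - w) ∈ C := by
    have h2 := hconv hw hy (by linarith : (0:ℝ) ≤ 1 - t) (le_of_lt ht0) (by ring)
    convert h2 using 1
    module
  have hkey := hmin _ hmem
  have hsq : ‖w - x‖ ^ 2 ≤ ‖w + t • (y - w) - x‖ ^ 2 := by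
    nlinarith [hkey, norm_nonneg (w + t • (y - w) - x), norm_nonneg (w - x)]
  have hexp : ‖w + t • (y - w) - x‖ ^ 2
      = ‖w - x‖ ^ 2 - 2 * t * a + t ^ 2 * ‖y - w‖ ^ 2 := by
    have h1 : w + t • (y - w) - x = (w - x) + t • (y - w) := by abel
    rw [h1, norm_add_sq_real, real_inner_smul_right, norm_smul]
    have h2 : ⟪w - x, y - w⟫ = -a := by
      rw [ha, ← inner_neg_left]; congr 1; abel
    rw [h2]
    simp [abs_of_pos ht0, mul_pow]
    ring
  rw [hexp] at hsq
  nlinarith [mul_le_mul_of_nonneg_left hta (le_of_lt ht0)]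

/-- Error bound for linear variational inequalities: if `M` is positive definite
with `⟪M d, d⟫ ≥ c‖d‖²` (where `c > 0` is the smallest eigenvalue of the
symmetric part of `M`) and `ẑ ∈ C` solves the LVI, then for any `z ∈ C`,
`‖z - ẑ‖ ≤ ((1 + ‖M‖)/c) ‖z - P_C (z - (M z + q))‖`. -/
theorem lvi_error_bound {n : ℕ}
    (C : Set (EuclideanSpace ℝ (Fin n))) (hne : C.Nonempty) (hcl : IsClosed C)
    (hconv : Convex ℝ C)
    (M : EuclideanSpace ℝ (Fin n) →L[ℝ] EuclideanSpace ℝ (Fin n))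
    (q : EuclideanSpace ℝ (Fin n))
    (c : ℝ) (hc : 0 < c)
    (hM : ∀ d : EuclideanSpace ℝ (Fin n), c * ‖d‖ ^ 2 ≤ ⟪M d, d⟫)
    (P : EuclideanSpace ℝ (Fin n) → EuclideanSpace ℝ (Fin n))
    (hPmem : ∀ x, P x ∈ C)
    (hPmin : ∀ x, ∀ y ∈ C, ‖P x - x‖ ≤ ‖y - x‖)
    (zh : EuclideanSpace ℝ (Fin n)) (hzh : zh ∈ C)
    (hsol : ∀ x ∈ C, 0 ≤ ⟪M zh + q, x - zh⟫) :
    ∀ z ∈ C, ‖z - zh‖ ≤ (1 + ‖M‖) / c * ‖z - P (z - (M z + q))‖ := by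
  intro z hz
  obtain ⟨w, hw⟩ : ∃ w, w = P (z - (M z + q)) := ⟨_, rfl⟩
  obtain ⟨r, hr⟩ : ∃ r, r = z - w := ⟨_, rfl⟩
  obtain ⟨d, hd⟩ : ∃ d, d = z - zh := ⟨_, rfl⟩
  have hwC : w ∈ C := hw ▸ hPmem _
  -- projection characterization at point z - (M z + q), tested at zh
  have hproj : ⟪r - (M z + q), r - d⟫ ≤ 0 := by
    have := proj_var_ineq hconv hwC
      (fun y hy => by rw [hw]; exact hPmin (z - (M z + q)) y hy) zh hzh
    have e1 : z - (M z + q) - w = r - (M z + q) := by rw [hr]; abel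
    have e2 : zh - w = r - d := by rw [hr, hd]; abel
    rwa [e1, e2] at this
  -- solution inequality tested at w
  have hsol' : ⟪M zh + q, r - d⟫ ≤ 0 := by
    have := hsol w hwC
    have e3 : w - zh = -(r - d) := by rw [hr, hd]; abel
    rw [e3, inner_neg_right] at this
    linarith
  -- combine
  have hcomb : ⟪r - M d, r - d⟫ ≤ 0 := by
    have hlin : r - M d = r - (M z + q) + (M zh + q) := by
      rw [hd, map_sub]; abel
    rw [hlin, inner_add_left]
    linarith
  have hexp : ⟪M d, d⟫ ≤ ⟪r, d⟫ + ⟪M d, r⟫ - ‖r‖ ^ 2 := by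
    rw [inner_sub_left, inner_sub_right, inner_sub_right,
      real_inner_self_eq_norm_sq] at hcomb
    linarith
  have hbound : c * ‖d‖ ^ 2 ≤ (1 + ‖M‖) * ‖r‖ * ‖d‖ := by
    have h1 : ⟪r, d⟫ ≤ ‖r‖ * ‖d‖ := real_inner_le_norm r d
    have h2 : ⟪M d, r⟫ ≤ ‖M d‖ * ‖r‖ := real_inner_le_norm _ _
    have h3 : ‖M d‖ ≤ ‖M‖ * ‖d‖ := M.le_opNorm d
    have h4 := hM d
    nlinarith [sq_nonneg ‖r‖, norm_nonneg r, norm_nonneg d]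
  have hMn : (0:ℝ) ≤ 1 + ‖M‖ := by positivity
  have main : ‖d‖ ≤ (1 + ‖M‖) / c * ‖r‖ := by
    rcases eq_or_lt_of_le (norm_nonneg d) with h0 | h0
    · rw [← h0]; positivity
    · rw [div_mul_eq_mul_div, le_div_iff₀ hc]
      have := le_of_mul_le_mul_right
        (by linarith : c * ‖d‖ * ‖d‖ ≤ (1 + ‖M‖) * ‖r‖ * ‖d‖) h0
      linarith
  rw [← hw, ← hr, ← hd]
  exact main
end

section
/- Suppose ⟨∇F(x_k) d, d⟩ ≥ μ‖d‖² for all d, ‖R‖ ≤ (L₂/2)‖x* − x_k‖² where R = F(x*) − F(x_k) − ∇F(x_k)(x* − x_k), and ⟨F(x*) − F(x_k) − (B + μ_k I)(ẑ − x_k), x* − ẑ⟩ ≤ 0. Then μ‖ẑ − x*‖ ≤ (L₂/2)‖x* − x_k‖² + ‖B − ∇F(x_k) + μ_k I‖ · ‖ẑ − x_k‖. -/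
open scoped RealInnerProductSpace

/-- From strong positive definiteness of the Jacobian, the Taylor remainder bound,
and the combined VIP inequality, one obtains
`μ‖ẑ - x*‖ ≤ (L₂/2)‖x* - x_k‖² + ‖B - ∇F(x_k) + μ_k I‖ ‖ẑ - x_k‖`. -/
theorem subproblem_solution_bound {n : ℕ}
    (A B : EuclideanSpace ℝ (Fin n) →L[ℝ] EuclideanSpace ℝ (Fin n))
    (F : EuclideanSpace ℝ (Fin n) → EuclideanSpace ℝ (Fin n))
    (xk xs zh : EuclideanSpace ℝ (Fin n)) (hne : zh ≠ xs)
    (μ μk L₂ : ℝ) (hμ : 0 < μ) (hμk : 0 < μk) (hL₂ : 0 < L₂)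
    (hA : ∀ d : EuclideanSpace ℝ (Fin n), μ * ‖d‖ ^ 2 ≤ ⟪A d, d⟫)
    (R : EuclideanSpace ℝ (Fin n))
    (hR : R = F xs - F xk - A (xs - xk))
    (hRbound : ‖R‖ ≤ L₂ / 2 * ‖xs - xk‖ ^ 2)
    (hineq : ⟪F xs - F xk - (B (zh - xk) + μk • (zh - xk)), xs - zh⟫ ≤ 0) :
    μ * ‖zh - xs‖ ≤ L₂ / 2 * ‖xs - xk‖ ^ 2 +
      ‖B - A + μk • (ContinuousLinearMap.id ℝ (EuclideanSpace ℝ (Fin n)))‖ *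
        ‖zh - xk‖ := by
  set d := zh - xs with hd
  set u := zh - xk with hu
  set M := B - A + μk • (ContinuousLinearMap.id ℝ (EuclideanSpace ℝ (Fin n))) with hM
  have hdne : d ≠ 0 := sub_ne_zero.mpr hne
  have hdpos : 0 < ‖d‖ := norm_pos_iff.mpr hdne
  -- rewrite the VIP inequality
  have hX : F xs - F xk - (B u + μk • u) = R - A d - M u := by
    have hMu : M u = B u - A u + μk • u := by
      simp [hM, ContinuousLinearMap.add_apply, ContinuousLinearMap.sub_apply,
        ContinuousLinearMap.smul_apply]
    have hAd : A (xs - xk) = A u - A d := by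
      rw [← map_sub]; congr 1; simp only [hu, hd]; abel
    rw [hR, hAd, hMu]; abel
  have hkey : 0 ≤ ⟪R - A d - M u, d⟫ := by
    have : ⟪R - A d - M u, -d⟫ ≤ 0 := by
      rw [← hX]
      have : xs - zh = -d := by simp [hd]
      rwa [this] at hineq
    rw [inner_neg_right] at this
    linarith
  have h1 : ⟪A d, d⟫ ≤ ⟪R, d⟫ - ⟪M u, d⟫ := by
    have := hkey
    rw [inner_sub_left, inner_sub_left] at this
    linarith
  have h2 : ⟪R, d⟫ ≤ ‖R‖ * ‖d‖ := real_inner_le_norm R d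
  have h3 : -⟪M u, d⟫ ≤ ‖M‖ * ‖u‖ * ‖d‖ := by
    calc -⟪M u, d⟫ ≤ |⟪M u, d⟫| := neg_le_abs _
    _ ≤ ‖M u‖ * ‖d‖ := abs_real_inner_le_norm _ _
    _ ≤ ‖M‖ * ‖u‖ * ‖d‖ := by
        gcongr; exact M.le_opNorm u
  have hchain : μ * ‖d‖ ^ 2 ≤ (L₂ / 2 * ‖xs - xk‖ ^ 2 + ‖M‖ * ‖u‖) * ‖d‖ := by
    calc μ * ‖d‖ ^ 2 ≤ ⟪A d, d⟫ := hA d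
    _ ≤ ⟪R, d⟫ - ⟪M u, d⟫ := h1
    _ ≤ ‖R‖ * ‖d‖ + ‖M‖ * ‖u‖ * ‖d‖ := by linarith
    _ ≤ (L₂ / 2 * ‖xs - xk‖ ^ 2 + ‖M‖ * ‖u‖) * ‖d‖ := by
        rw [add_mul]; gcongr
  have h' : (μ * ‖d‖) * ‖d‖ ≤ (L₂ / 2 * ‖xs - xk‖ ^ 2 + ‖M‖ * ‖u‖) * ‖d‖ := by
    nlinarith [hchain]
  have hfin := le_of_mul_le_mul_right h' hdpos
  linarith [hfin]
end

section
/- If F is Lipschitz continuous with constant L on a neighborhood X of a solution x* of VIP(F,C), then there exists a constant L̄ > 0 such that the regularized gap function satisfies f_α(x) ≤ ⟨F(x*), x − x*⟩ + L̄‖x − x*‖² for all x ∈ X ∩ C. -/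
open scoped RealInnerProductSpace

/-- If `F` is `L`-Lipschitz on a neighborhood `X` of a solution `x*` of VIP(F,C),
then there is `L̄ > 0` with `f_α(x) ≤ ⟪F x*, x - x*⟫ + L̄ ‖x - x*‖²` on `X ∩ C`,
where `f_α` is the regularized gap function. -/
theorem gap_function_upper_bound {n : ℕ}
    (C : Set (EuclideanSpace ℝ (Fin n))) (hne : C.Nonempty) (hcl : IsClosed C)
    (hconv : Convex ℝ C)
    (F : EuclideanSpace ℝ (Fin n) → EuclideanSpace ℝ (Fin n))
    (α : ℝ) (hα : 0 < α)
    (P : EuclideanSpace ℝ (Fin n) → EuclideanSpace ℝ (Fin n))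
    (hPmem : ∀ x, P x ∈ C)
    (hPmin : ∀ x, ∀ y ∈ C, ‖P x - x‖ ≤ ‖y - x‖)
    (f : EuclideanSpace ℝ (Fin n) → ℝ)
    (hf : ∀ x, f x = -⟪F x, P (x - α⁻¹ • F x) - x⟫
        - (α / 2) * ‖P (x - α⁻¹ • F x) - x‖ ^ 2)
    (X : Set (EuclideanSpace ℝ (Fin n)))
    (xs : EuclideanSpace ℝ (Fin n)) (hxs : xs ∈ C)
    (hXnbhd : X ∈ nhds xs)
    (L : ℝ) (hL : 0 < L)
    (hLip : ∀ x ∈ X, ∀ y ∈ X, ‖F x - F y‖ ≤ L * ‖x - y‖)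
    (hsol : ∀ y ∈ C, 0 ≤ ⟪F xs, y - xs⟫) :
    ∃ Lbar : ℝ, 0 < Lbar ∧ ∀ x ∈ X ∩ C,
      f x ≤ ⟪F xs, x - xs⟫ + Lbar * ‖x - xs‖ ^ 2 := by
  have hxsX : xs ∈ X := mem_of_mem_nhds hXnbhd
  refine ⟨L ^ 2 / (2 * α), by positivity, ?_⟩
  rintro x ⟨hxX, hxC⟩
  set ybar := P (x - α⁻¹ • F x) with hybar
  have hyC : ybar ∈ C := hPmem _
  -- solution property at ybar
  have h1 : 0 ≤ ⟪F xs, ybar - xs⟫ := hsol ybar hyC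
  -- Cauchy-Schwarz
  have h2 : -⟪F x - F xs, ybar - x⟫ ≤ ‖F x - F xs‖ * ‖ybar - x‖ := by
    have := abs_real_inner_le_norm (F x - F xs) (ybar - x)
    have := neg_abs_le (⟪F x - F xs, ybar - x⟫ : ℝ)
    linarith
  -- Lipschitz
  have h3 : ‖F x - F xs‖ ≤ L * ‖x - xs‖ := hLip x hxX xs hxsX
  -- inner product algebra
  have h4 : ⟪F x, ybar - x⟫
      = ⟪F xs, ybar - xs⟫ - ⟪F xs, x - xs⟫ + ⟪F x - F xs, ybar - x⟫ := by
    simp only [inner_sub_left, inner_sub_right]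
    ring
  have hd0 : (0:ℝ) ≤ ‖ybar - x‖ := norm_nonneg _
  have he0 : (0:ℝ) ≤ ‖x - xs‖ := norm_nonneg _
  have h5 : ‖F x - F xs‖ * ‖ybar - x‖ ≤ L * ‖x - xs‖ * ‖ybar - x‖ :=
    mul_le_mul_of_nonneg_right h3 hd0
  -- Young's inequality
  have h6 : L * ‖x - xs‖ * ‖ybar - x‖
      ≤ L ^ 2 / (2 * α) * ‖x - xs‖ ^ 2 + (α / 2) * ‖ybar - x‖ ^ 2 := by
    rw [div_mul_eq_mul_div, div_add' _ _ _ (by positivity), le_div_iff₀ (by positivity : (0:ℝ) < 2 * α)]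
    nlinarith [sq_nonneg (L * ‖x - xs‖ - α * ‖ybar - x‖)]
  rw [hf x]
  have := h1
  nlinarith [h2, h4, h5, h6]
end
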